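/- Fix n ≥ 1, ε: [2n] → {1,*}, and pairings p, q of [2n] compatible with ε. Suppose the partition p∨q is crossing, i.e. there exist a < b < c < d in [2n] with a, c in one block of p∨q and b, d in a different block. Then sup over all N-indexed choices of 2n-tuples of permutations σ_1,…,σ_{2n} of [N]×[N] of the cardinality |A^{(p,q)}| is o( N^{ 2n + 1 − |p∨q| } ) as N → ∞; that is, for every sequence of such tuples of permutations, |A^{(p,q)}_N| / N^{ 2n + 1 − |p∨q| } → 0. -/

import Mathlib

open Filter

/-- `(k_s, l_s) = σ_s ∘ ε_s (i_s, j_s)`. -/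
def klMap {n N : ℕ} (ε : Fin (2 * n) → Bool) (σ : Fin (2 * n) → Equiv.Perm (Fin N × Fin N))
    (x : (Fin (2 * n) → Fin N) × (Fin (2 * n) → Fin N)) (s : Fin (2 * n)) : Fin N × Fin N :=
  if ε s then (σ s) (x.1 s, x.2 s) else (σ s) (x.2 s, x.1 s)

/-- The set `A^{(p,q)}` of tuples `(i_1, j_1, …, i_{2n}, j_{2n})` with `j_s = i_{s+1}`
(cyclically, so that `j_{2n} = i_1`), `k_s = k_{p(s)}` and `l_s = l_{q(s)}` for all `s`. -/
def tupleSet (n N : ℕ) (ε : Fin (2 * n) → Bool) (σ : Fin (2 * n) → Equiv.Perm (Fin N × Fin N))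
    (p q : Equiv.Perm (Fin (2 * n))) :
    Finset ((Fin (2 * n) → Fin N) × (Fin (2 * n) → Fin N)) :=
  Finset.univ.filter fun x =>
    (∀ s, x.2 s = x.1 (finRotate (2 * n) s)) ∧
    (∀ s, (klMap ε σ x s).1 = (klMap ε σ x (p s)).1) ∧
    (∀ s, (klMap ε σ x s).2 = (klMap ε σ x (q s)).2)

/-- `F(S)`:  the number of families `(i_s, j_s)_{s ∈ S}` that extend to an element of
`A^{(p,q)}`. -/
def Fcnt (n N : ℕ) (ε : Fin (2 * n) → Bool) (σ : Fin (2 * n) → Equiv.Perm (Fin N × Fin N))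
    (p q : Equiv.Perm (Fin (2 * n))) (S : Finset (Fin (2 * n))) : ℕ :=
  ((tupleSet n N ε σ p q).image fun x => fun s : {a // a ∈ S} => (x.1 s.1, x.2 s.1)).card

/-- The join `p ∨ q` of the two pair partitions, as an equivalence relation. -/
def joinRel {m : ℕ} (p q : Equiv.Perm (Fin m)) : Fin m → Fin m → Prop :=
  Relation.EqvGen fun a b => p a = b ∨ q a = b

/-- `|p ∨ q|`, the number of blocks of the join partition. -/
noncomputable def numBlocks {m : ℕ} (p q : Equiv.Perm (Fin m)) : ℕ :=
  Set.ncard {B : Set (Fin m) | ∃ a, B = {x | joinRel p q a x}}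

/-!
Reveal the pairs `(i_s, j_s)` one index at a time. A pair is determined by its two cyclic
neighbours (`i_s = j_{s-1}`, `j_s = i_{s+1}`), and also by its two partners
(`k_s = k_{p s}`, `l_s = l_{q s}`, as `σ_s` is a bijection); so the pair at `s` takes at most
`N ^ (2 - k)` values, `k` being the larger of the numbers of its neighbours and of its partners
revealed before it. Revealing along the cycle from `a`, every index but the
first has an earlier neighbour, exactly one index of each `p`-pair and of each `q`-pair has its
partner earlier, and the first index of a block has no earlier partner; counting gives
`|A| ≤ N ^ (2n + 1 - |p ∨ q|)`. Crossing saves the last factor: some `x ∈ (a, c)` has a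
partner outside `[a, c]`, and revealing `(x, c]` backwards before `x` makes both neighbours of
`x` earlier while that partner is still later.
-/

open Finset

theorem Finset.card_image_prod_le {α β γ : Type*} [DecidableEq β] [DecidableEq γ]
    (A : Finset α) (f : α → β) (g : α → γ) (k : ℕ)
    (hk : ∀ z ∈ A, #((A.filter fun z' => f z' = f z).image g) ≤ k) :
    #(A.image fun z => (f z, g z)) ≤ k * #(A.image f) := by
  have h := card_le_mul_card_image (A.image fun z => (f z, g z)) k (f := Prod.fst) ?_
  · rwa [image_image] at h
  rintro _ hb
  obtain ⟨z, hz, rfl⟩ := mem_image.mp (by simpa [image_image] using hb)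
  calc #{t ∈ A.image (fun z => (f z, g z)) | t.1 = f z}
      = #(((A.filter fun z' => f z' = f z).image g).image (Prod.mk (f z))) := by
        rw [filter_image, image_image]
        congr 1
        refine image_congr fun z' hz' => ?_
        rw [Function.comp_apply, show f z' = f z from (mem_filter.mp hz').2]
    _ ≤ k := card_image_le.trans (hk z hz)

theorem card_le_pow_of_fst_snd_const {N : ℕ} (T : Finset (Fin N × Fin N)) (P Q : Prop)
    [Decidable P] [Decidable Q] (hP : P → ∃ i, ∀ t ∈ T, t.1 = i)
    (hQ : Q → ∃ j, ∀ t ∈ T, t.2 = j) :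
    #T ≤ N ^ (2 - ((if P then 1 else 0) + (if Q then 1 else 0))) := by
  have coord : ∀ (f : Fin N × Fin N → Fin N) (R : Prop) [Decidable R],
      (R → ∃ i, ∀ t ∈ T, f t = i) → #(T.image f) ≤ N ^ (1 - if R then 1 else 0) := by
    intro f R _ hR
    split_ifs with h
    · obtain ⟨i, hi⟩ := hR h
      rw [pow_zero, card_le_one]
      simp only [mem_image]
      rintro _ ⟨t, ht, rfl⟩ _ ⟨t', ht', rfl⟩
      rw [hi t ht, hi t' ht']
    · simpa using card_le_univ (T.image f)
  calc #T ≤ #(T.image Prod.fst ×ˢ T.image Prod.snd) := card_le_card subset_product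
    _ = #(T.image Prod.fst) * #(T.image Prod.snd) := card_product _ _
    _ ≤ N ^ (1 - if P then 1 else 0) * N ^ (1 - if Q then 1 else 0) :=
        Nat.mul_le_mul (coord _ P hP) (coord _ Q hQ)
    _ = _ := by rw [← pow_add]; split_ifs <;> rfl

def earlier {α : Type*} [Fintype α] (ord : α → ℕ) (T : ℕ) : Finset α :=
  univ.filter fun u => ord u < T

@[simp]
theorem mem_earlier {α : Type*} [Fintype α] {ord : α → ℕ} {T : ℕ} {u : α} :
    u ∈ earlier ord T ↔ ord u < T := by
  simp [earlier]

theorem le_pow_sum_of_insert_earlier {α : Type*} [Fintype α] [DecidableEq α]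
    (F : Finset α → ℕ) (c ord : α → ℕ) (hord : Function.Injective ord) (N : ℕ)
    (h0 : F ∅ ≤ 1)
    (hstep : ∀ a, F (insert a (earlier ord (ord a))) ≤ N ^ c a * F (earlier ord (ord a))) :
    F univ ≤ N ^ ∑ a, c a := by
  have key : ∀ T, F (earlier ord T) ≤ N ^ ∑ a ∈ earlier ord T, c a := by
    intro T
    induction T with
    | zero => simpa [earlier] using h0
    | succ T ih =>
      by_cases hT : ∃ a, ord a = T
      · obtain ⟨a, rfl⟩ := hT
        have hins : earlier ord (ord a + 1) = insert a (earlier ord (ord a)) := by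
          ext u
          simp only [mem_earlier, mem_insert, Nat.lt_succ_iff_lt_or_eq, hord.eq_iff]
          tauto
        rw [hins, sum_insert (by simp), pow_add]
        exact (hstep a).trans (Nat.mul_le_mul_left _ ih)
      · have hsame : earlier ord (T + 1) = earlier ord T := by
          ext u
          simp only [mem_earlier, Nat.lt_succ_iff_lt_or_eq]
          exact or_iff_left fun h => hT ⟨u, h⟩
        rwa [hsame]
  have huniv : earlier ord (univ.sup ord + 1) = univ :=
    filter_true_of_mem fun u _ => Nat.lt_succ_of_le (le_sup (mem_univ u))
  simpa [huniv] using key (univ.sup ord + 1)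

def countIn {α : Type*} [DecidableEq α] (S : Finset α) (u v : α) : ℕ :=
  (if u ∈ S then 1 else 0) + (if v ∈ S then 1 else 0)

def revealCost {m : ℕ} (p q : Equiv.Perm (Fin m)) (S : Finset (Fin m)) (s : Fin m) : ℕ :=
  2 - max (countIn S (p s) (q s)) (countIn S ((finRotate m).symm s) (finRotate m s))

section Reveal

variable {n N : ℕ} (ε : Fin (2 * n) → Bool) (σ : Fin (2 * n) → Equiv.Perm (Fin N × Fin N))
  (p q : Equiv.Perm (Fin (2 * n)))

def entryPerm (s : Fin (2 * n)) : Equiv.Perm (Fin N × Fin N) :=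
  if ε s then σ s else (Equiv.prodComm _ _).trans (σ s)

theorem klMap_eq_entryPerm (x : (Fin (2 * n) → Fin N) × (Fin (2 * n) → Fin N))
    (s : Fin (2 * n)) : klMap ε σ x s = entryPerm ε σ s (x.1 s, x.2 s) := by
  unfold klMap entryPerm
  split <;> rfl

theorem mem_tupleSet {x : (Fin (2 * n) → Fin N) × (Fin (2 * n) → Fin N)} :
    x ∈ tupleSet n N ε σ p q ↔
      (∀ s, x.2 s = x.1 (finRotate (2 * n) s)) ∧
      (∀ s, (klMap ε σ x s).1 = (klMap ε σ x (p s)).1) ∧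
      (∀ s, (klMap ε σ x s).2 = (klMap ε σ x (q s)).2) := by
  simp [tupleSet]

def choicesAt (S : Finset (Fin (2 * n))) (s : Fin (2 * n))
    (z : (Fin (2 * n) → Fin N) × (Fin (2 * n) → Fin N)) : Finset (Fin N × Fin N) :=
  ((tupleSet n N ε σ p q).filter fun z' => ∀ u ∈ S, (z'.1 u, z'.2 u) = (z.1 u, z.2 u)).image
    fun z' => (z'.1 s, z'.2 s)

theorem Fcnt_empty_le : Fcnt n N ε σ p q ∅ ≤ 1 :=
  card_le_one.mpr fun _ _ _ _ => Subsingleton.elim _ _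

theorem Fcnt_univ : Fcnt n N ε σ p q univ = #(tupleSet n N ε σ p q) := by
  refine card_image_of_injective _ fun x y hxy => ?_
  have h : ∀ s, (x.1 s, x.2 s) = (y.1 s, y.2 s) := fun s => congrFun hxy ⟨s, mem_univ s⟩
  exact Prod.ext (funext fun s => (Prod.mk.inj (h s)).1) (funext fun s => (Prod.mk.inj (h s)).2)

theorem Fcnt_insert_le (S : Finset (Fin (2 * n))) (s : Fin (2 * n)) (k : ℕ)
    (hk : ∀ z ∈ tupleSet n N ε σ p q, #(choicesAt ε σ p q S s z) ≤ N ^ k) :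
    Fcnt n N ε σ p q (insert s S) ≤ N ^ k * Fcnt n N ε σ p q S := by
  set A := tupleSet n N ε σ p q
  let extend (bv : (S → Fin N × Fin N) × (Fin N × Fin N)) (u : {u // u ∈ insert s S}) :
      Fin N × Fin N :=
    if h : u.1 ∈ S then bv.1 ⟨u.1, h⟩ else bv.2
  have hsplit : (A.image fun x (u : {u // u ∈ insert s S}) => (x.1 u, x.2 u)) =
      (A.image fun z => (fun u : S => (z.1 u, z.2 u), (z.1 s, z.2 s))).image extend := by
    rw [image_image]
    refine image_congr fun z _ => funext fun u => ?_
    by_cases hu : u.1 ∈ S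
    · simp [extend, hu]
    · have hus : u.1 = s := (mem_insert.mp u.2).resolve_right hu
      simp [extend, hus]
  calc Fcnt n N ε σ p q (insert s S) ≤ #(A.image fun z =>
        (fun u : S => (z.1 u, z.2 u), (z.1 s, z.2 s))) := by
        unfold Fcnt
        rw [hsplit]
        exact card_image_le
    _ ≤ N ^ k * Fcnt n N ε σ p q S := by
        refine card_image_prod_le A _ _ _ fun z hz => le_of_eq_of_le ?_ (hk z hz)
        unfold choicesAt
        congr 2
        refine filter_congr fun z' _ => ?_
        simp [funext_iff]

variable {ε σ p q}

theorem card_choicesAt_le_of_neighbours {S : Finset (Fin (2 * n))} {s : Fin (2 * n)}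
    (z : (Fin (2 * n) → Fin N) × (Fin (2 * n) → Fin N)) :
    #(choicesAt ε σ p q S s z) ≤
      N ^ (2 - countIn S ((finRotate (2 * n)).symm s) (finRotate (2 * n) s)) := by
  refine card_le_pow_of_fst_snd_const _ _ _
    (fun h => ⟨z.2 ((finRotate (2 * n)).symm s), ?_⟩)
    (fun h => ⟨z.1 (finRotate (2 * n) s), ?_⟩)
  all_goals
    simp only [choicesAt, mem_image, mem_filter, forall_exists_index, and_imp]
    rintro _ z' hz' hagree rfl
  · have hpred := ((mem_tupleSet ε σ p q).mp hz').1 ((finRotate (2 * n)).symm s)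
    rw [Equiv.apply_symm_apply] at hpred
    rw [← hpred, (Prod.mk.inj (hagree _ h)).2]
  · rw [((mem_tupleSet ε σ p q).mp hz').1 s, (Prod.mk.inj (hagree _ h)).1]

theorem card_choicesAt_le_of_partners {S : Finset (Fin (2 * n))} {s : Fin (2 * n)}
    (z : (Fin (2 * n) → Fin N) × (Fin (2 * n) → Fin N)) :
    #(choicesAt ε σ p q S s z) ≤ N ^ (2 - countIn S (p s) (q s)) := by
  rw [← card_image_of_injective _ (entryPerm ε σ s).injective]
  refine card_le_pow_of_fst_snd_const _ _ _
    (fun h => ⟨(entryPerm ε σ (p s) (z.1 (p s), z.2 (p s))).1, ?_⟩)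
    (fun h => ⟨(entryPerm ε σ (q s) (z.1 (q s), z.2 (q s))).2, ?_⟩)
  all_goals
    simp only [choicesAt, image_image, mem_image, mem_filter, Function.comp_apply,
      forall_exists_index, and_imp]
    rintro _ z' hz' hagree rfl
    obtain ⟨-, hk, hl⟩ := (mem_tupleSet ε σ p q).mp hz'
  · rw [← hagree _ h, ← klMap_eq_entryPerm, ← klMap_eq_entryPerm, hk]
  · rw [← hagree _ h, ← klMap_eq_entryPerm, ← klMap_eq_entryPerm, hl]

theorem Fcnt_insert_le_revealCost (S : Finset (Fin (2 * n))) (s : Fin (2 * n)) :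
    Fcnt n N ε σ p q (insert s S) ≤ N ^ revealCost p q S s * Fcnt n N ε σ p q S := by
  refine Fcnt_insert_le ε σ p q S s _ fun z _ => ?_
  unfold revealCost
  rcases max_choice (countIn S (p s) (q s))
    (countIn S ((finRotate (2 * n)).symm s) (finRotate (2 * n) s)) with h | h <;> rw [h]
  · exact card_choicesAt_le_of_partners z
  · exact card_choicesAt_le_of_neighbours z

theorem card_tupleSet_le_pow_sum_revealCost (ord : Fin (2 * n) → ℕ)
    (hord : Function.Injective ord) :
    #(tupleSet n N ε σ p q) ≤ N ^ ∑ s, revealCost p q (earlier ord (ord s)) s := by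
  rw [← Fcnt_univ]
  exact le_pow_sum_of_insert_earlier _ _ ord hord N (Fcnt_empty_le ε σ p q)
    fun a => Fcnt_insert_le_revealCost _ _

end Reveal

theorem countIn_le_two {α : Type*} [DecidableEq α] (S : Finset α) (u v : α) :
    countIn S u v ≤ 2 := by
  unfold countIn
  split_ifs <;> simp

theorem two_mul_sum_ite_earlier_of_involutive {α : Type*} [Fintype α] [DecidableEq α]
    {e : α → α} (he : Function.Involutive e) (hfix : ∀ s, e s ≠ s) {ord : α → ℕ}
    (hord : Function.Injective ord) :
    2 * ∑ s, (if e s ∈ earlier ord (ord s) then 1 else 0) = Fintype.card α := by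
  set f : α → ℕ := fun s => if e s ∈ earlier ord (ord s) then 1 else 0
  change 2 * ∑ s, f s = _
  have hpair : ∀ s, f s + f (e s) = 1 := by
    intro s
    have hne : ord (e s) ≠ ord s := fun h => hfix s (hord h)
    simp only [f, mem_earlier, he s]
    split_ifs <;> omega
  have hswap : ∑ s, f (e s) = ∑ s, f s := he.bijective.sum_comp fun s => f s
  have hsum : ∑ s, (f s + f (e s)) = Fintype.card α := by simp [hpair]
  rw [sum_add_distrib, hswap] at hsum
  omega

section Blocks

variable {m : ℕ} (p q : Equiv.Perm (Fin m))

theorem joinRel_equivalence : Equivalence (joinRel p q) :=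
  Relation.EqvGen.is_equivalence _

theorem joinRel_apply_left (s : Fin m) : joinRel p q s (p s) :=
  Relation.EqvGen.rel _ _ (Or.inl rfl)

theorem joinRel_apply_right (s : Fin m) : joinRel p q s (q s) :=
  Relation.EqvGen.rel _ _ (Or.inr rfl)

open Classical in
noncomputable def blockLeaders (ord : Fin m → ℕ) : Finset (Fin m) :=
  univ.filter fun s => ∀ u, joinRel p q s u → ord s ≤ ord u

theorem mem_blockLeaders {ord : Fin m → ℕ} {s : Fin m} :
    s ∈ blockLeaders p q ord ↔ ∀ u, joinRel p q s u → ord s ≤ ord u := by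
  simp [blockLeaders]

theorem numBlocks_eq_card_blockLeaders {ord : Fin m → ℕ} (hord : Function.Injective ord) :
    numBlocks p q = #(blockLeaders p q ord) := by
  classical
  have hr := joinRel_equivalence p q
  have hblocks : {B : Set (Fin m) | ∃ a, B = {x | joinRel p q a x}} =
      (fun s => {x | joinRel p q s x}) '' (blockLeaders p q ord : Set (Fin m)) := by
    ext B
    simp only [Set.mem_ofPred_eq, Set.mem_image, mem_coe, mem_blockLeaders]
    constructor
    · rintro ⟨a, rfl⟩
      obtain ⟨s, hs, hmin⟩ := exists_min_image (univ.filter (joinRel p q a)) ord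
        ⟨a, by simpa using hr.refl a⟩
      replace hs : joinRel p q a s := by simpa using hs
      refine ⟨s, fun u hu => hmin u (by simpa using hr.trans hs hu), ?_⟩
      ext u
      exact ⟨hr.trans hs, hr.trans (hr.symm hs)⟩
    · rintro ⟨s, -, rfl⟩
      exact ⟨s, rfl⟩
  rw [numBlocks, hblocks, Set.InjOn.ncard_image, Set.ncard_coe_finset]
  intro s hs t ht hst
  have hs_t : joinRel p q s t := (Set.ext_iff.mp hst t).mpr (hr.refl t)
  exact hord (le_antisymm ((mem_blockLeaders p q).mp hs t hs_t)
    ((mem_blockLeaders p q).mp ht s (hr.symm hs_t)))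

variable {p q}

theorem countIn_earlier_partners_of_mem_blockLeaders {ord : Fin m → ℕ} {s : Fin m}
    (hs : s ∈ blockLeaders p q ord) : countIn (earlier ord (ord s)) (p s) (q s) = 0 := by
  have hps := (mem_blockLeaders p q).mp hs _ (joinRel_apply_left p q s)
  have hqs := (mem_blockLeaders p q).mp hs _ (joinRel_apply_right p q s)
  simp [countIn, hps, hqs]

theorem sum_countIn_earlier_partners (hp : Function.Involutive p)
    (hq : Function.Involutive q) (hpf : ∀ s, p s ≠ s) (hqf : ∀ s, q s ≠ s)
    {ord : Fin m → ℕ} (hord : Function.Injective ord) :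
    ∑ s, countIn (earlier ord (ord s)) (p s) (q s) = m := by
  have hp2 := two_mul_sum_ite_earlier_of_involutive hp hpf hord
  have hq2 := two_mul_sum_ite_earlier_of_involutive hq hqf hord
  simp only [Fintype.card_fin] at hp2 hq2
  simp only [countIn, sum_add_distrib]
  omega

end Blocks

section Accounting

variable {m : ℕ} {p q : Equiv.Perm (Fin m)} {ord : Fin m → ℕ}

theorem revealCost_add_le (a x s : Fin m) (ha : ∀ u, ord a ≤ ord u)
    (hlead : ∀ t ∈ blockLeaders p q ord, t ≠ a →
      1 ≤ countIn (earlier ord (ord t)) ((finRotate m).symm t) (finRotate m t))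
    (hx : countIn (earlier ord (ord x)) ((finRotate m).symm x) (finRotate m x) = 2)
    (hxy : ord x < ord (p x) ∨ ord x < ord (q x)) :
    revealCost p q (earlier ord (ord s)) s + countIn (earlier ord (ord s)) (p s) (q s) +
      (if s ∈ (blockLeaders p q ord).erase a then 1 else 0) + (if s = x then 1 else 0) ≤ 2 := by
  have hxa : x ≠ a := by
    rintro rfl
    simp [countIn, (ha _).not_gt] at hx
  have hxP : countIn (earlier ord (ord x)) (p x) (q x) ≤ 1 := by
    unfold countIn
    rcases hxy with h | h <;> simp [h.not_gt] <;> split_ifs <;> simp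
  have hP := countIn_le_two (earlier ord (ord s)) (p s) (q s)
  have hR := countIn_le_two (earlier ord (ord s)) ((finRotate m).symm s) (finRotate m s)
  unfold revealCost
  simp only [mem_erase]
  by_cases hs : s ∈ blockLeaders p q ord
  · have hP0 := countIn_earlier_partners_of_mem_blockLeaders hs
    by_cases hsa : s = a
    · subst hsa
      rw [if_neg fun h => h.1 rfl, if_neg hxa.symm]
      omega
    · have hR1 := hlead s hs hsa
      rw [if_pos ⟨hsa, hs⟩]
      by_cases hsx : s = x
      · subst hsx
        rw [if_pos rfl]
        omega
      · rw [if_neg hsx]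
        omega
  · rw [if_neg fun h => hs h.2]
    by_cases hsx : s = x
    · subst hsx
      rw [if_pos rfl]
      omega
    · rw [if_neg hsx]
      omega

theorem sum_revealCost_add_numBlocks_le (hp : Function.Involutive p)
    (hq : Function.Involutive q) (hpf : ∀ s, p s ≠ s) (hqf : ∀ s, q s ≠ s)
    (hord : Function.Injective ord) (a x : Fin m) (ha : ∀ u, ord a ≤ ord u)
    (hlead : ∀ t ∈ blockLeaders p q ord, t ≠ a →
      1 ≤ countIn (earlier ord (ord t)) ((finRotate m).symm t) (finRotate m t))
    (hx : countIn (earlier ord (ord x)) ((finRotate m).symm x) (finRotate m x) = 2)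
    (hxy : ord x < ord (p x) ∨ ord x < ord (q x)) :
    ∑ s, revealCost p q (earlier ord (ord s)) s + numBlocks p q ≤ m := by
  have hsum := sum_le_sum fun s (_ : s ∈ univ) => revealCost_add_le a x s ha hlead hx hxy
  have haL : a ∈ blockLeaders p q ord := (mem_blockLeaders p q).mpr fun u _ => ha u
  simp only [sum_add_distrib, sum_countIn_earlier_partners hp hq hpf hqf hord, sum_boole,
    filter_eq', mem_univ, if_true, card_singleton, sum_const, card_univ, Fintype.card_fin,
    smul_eq_mul, filter_mem_eq_inter, univ_inter, card_erase_of_mem haL, Nat.cast_id] at hsum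
  have hL := card_pos.mpr ⟨a, haL⟩
  rw [numBlocks_eq_card_blockLeaders p q hord]
  omega

end Accounting

theorem val_finRotate {m : ℕ} (u : Fin m) :
    (finRotate m u : ℕ) = if (u : ℕ) + 1 = m then (0 : ℕ) else u + 1 := by
  cases m with
  | zero => exact u.elim0
  | succ m =>
    rw [coe_finRotate]
    simp [Fin.ext_iff]

theorem val_finRotate_symm {m : ℕ} (u : Fin m) :
    (u : ℕ) =
      if ((finRotate m).symm u : ℕ) + 1 = m then (0 : ℕ) else (finRotate m).symm u + 1 := by
  have h := val_finRotate ((finRotate m).symm u)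
  rwa [Equiv.apply_symm_apply] at h

section RevealOrder

variable {m : ℕ} {a x c : Fin m}

/-- Reveal `a, …, x - 1`, then `c, c - 1, …, x + 1`, then `x`, then the rest of the cycle
`c + 1, …, a - 1`. -/
def revealOrder (a x c : Fin m) (u : Fin m) : ℕ :=
  if (u : ℕ) < a then u + m - a
  else if (u : ℕ) = x then c - a
  else if (x : ℕ) < u ∧ (u : ℕ) ≤ c then x - a + (c - u)
  else u - a

theorem revealOrder_injective (hax : a < x) (hxc : x < c) :
    Function.Injective (revealOrder a x c) := by
  intro u v h
  have := c.isLt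
  have := u.isLt
  have := v.isLt
  rw [Fin.lt_def] at hax hxc
  unfold revealOrder at h
  apply Fin.ext
  split_ifs at h <;> omega

theorem revealOrder_self_left (hax : a < x) : revealOrder a x c a = 0 := by
  rw [Fin.lt_def] at hax
  unfold revealOrder
  split_ifs <;> omega

theorem revealOrder_lt_of_lt_or_lt (hax : a < x) (hxc : x < c) {y : Fin m}
    (hy : y < a ∨ c < y) : revealOrder a x c x < revealOrder a x c y := by
  have := c.isLt
  rw [Fin.lt_def] at hax hxc
  simp only [Fin.lt_def] at hy
  unfold revealOrder
  split_ifs <;> omega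

theorem revealOrder_neighbours_lt (hax : a < x) (hxc : x < c) :
    revealOrder a x c ((finRotate m).symm x) < revealOrder a x c x ∧
      revealOrder a x c (finRotate m x) < revealOrder a x c x := by
  have := c.isLt
  have hs := val_finRotate x
  have hp := val_finRotate_symm x
  rw [Fin.lt_def] at hax hxc
  unfold revealOrder
  constructor <;> split_ifs at * <;> omega

theorem revealOrder_exists_neighbour_lt (hax : a < x) (hxc : x < c) {s : Fin m}
    (hsa : s ≠ a) (hsc : s ≠ c) :
    revealOrder a x c ((finRotate m).symm s) < revealOrder a x c s ∨
      revealOrder a x c (finRotate m s) < revealOrder a x c s := by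
  have := c.isLt
  have := s.isLt
  have hs := val_finRotate s
  have hp := val_finRotate_symm s
  rw [Fin.lt_def] at hax hxc
  rw [Ne, Fin.ext_iff] at hsa hsc
  unfold revealOrder
  split_ifs at * <;> omega

variable {p q : Equiv.Perm (Fin m)}

theorem sum_revealCost_revealOrder_add_numBlocks_le (hp : Function.Involutive p)
    (hq : Function.Involutive q) (hpf : ∀ s, p s ≠ s) (hqf : ∀ s, q s ≠ s)
    (hax : a < x) (hxc : x < c) (hac : joinRel p q a c) {y : Fin m}
    (hy : y = p x ∨ y = q x) (hyout : y < a ∨ c < y) :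
    ∑ s, revealCost p q (earlier (revealOrder a x c) (revealOrder a x c s)) s + numBlocks p q
      ≤ m := by
  have hord := revealOrder_injective hax hxc
  have ha : ∀ u, revealOrder a x c a ≤ revealOrder a x c u := fun u => by
    rw [revealOrder_self_left hax]
    exact Nat.zero_le _
  refine sum_revealCost_add_numBlocks_le hp hq hpf hqf hord a x ha ?_ ?_ ?_
  · intro s hs hsa
    have hsc : s ≠ c := by
      rintro rfl
      have hca := (mem_blockLeaders p q).mp hs a ((joinRel_equivalence p q).symm hac)
      exact (hax.trans hxc).ne (hord (le_antisymm (ha s) hca))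
    have := revealOrder_exists_neighbour_lt hax hxc hsa hsc
    simp only [countIn, mem_earlier]
    split_ifs <;> omega
  · obtain ⟨hpred, hsucc⟩ := revealOrder_neighbours_lt hax hxc
    simp only [countIn, mem_earlier, hpred, hsucc, if_true]
  · rcases hy with rfl | rfl
    exacts [.inl (revealOrder_lt_of_lt_or_lt hax hxc hyout),
      .inr (revealOrder_lt_of_lt_or_lt hax hxc hyout)]

end RevealOrder

section Crossing

variable {m : ℕ} {p q : Equiv.Perm (Fin m)}

theorem iff_of_joinRel_of_closed (hp : Function.Involutive p) (hq : Function.Involutive q)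
    {P : Fin m → Prop} (hPp : ∀ u, P u → P (p u)) (hPq : ∀ u, P u → P (q u)) {u v : Fin m}
    (h : joinRel p q u v) : P u ↔ P v := by
  induction h with
  | rel u v huv =>
    rcases huv with rfl | rfl
    · exact ⟨hPp u, fun h => hp u ▸ hPp _ h⟩
    · exact ⟨hPq u, fun h => hq u ▸ hPq _ h⟩
  | refl => rfl
  | symm _ _ _ ih => exact ih.symm
  | trans _ _ _ _ _ ih₁ ih₂ => exact ih₁.trans ih₂

/-- The block of `b` meets `(a, c)` and leaves `[a, c]` (at `d`) without passing through the
block of `a ∋ c`, so some `p`- or `q`-edge jumps out of `(a, c)` over `a` or `c`. -/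
theorem exists_partner_escape (hp : Function.Involutive p) (hq : Function.Involutive q)
    {a b c d : Fin m} (hab : a < b) (hbc : b < c) (hcd : c < d) (hac : joinRel p q a c)
    (hbd : joinRel p q b d) (hnab : ¬ joinRel p q a b) :
    ∃ x, a < x ∧ x < c ∧ ∃ y, (y = p x ∨ y = q x) ∧ (y < a ∨ c < y) := by
  by_contra! hstay
  have hr := joinRel_equivalence p q
  let P : Fin m → Prop := fun u => a < u ∧ u < c ∧ ¬ joinRel p q a u
  have hclosed : ∀ u y, joinRel p q u y → (y = p u ∨ y = q u) → P u → P y := by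
    rintro u y huy hy ⟨hau, huc, hnau⟩
    obtain ⟨hay, hyc⟩ := hstay u hau huc y hy
    have hnay : ¬ joinRel p q a y := fun h => hnau (hr.trans h (hr.symm huy))
    refine ⟨hay.lt_of_ne ?_, hyc.lt_of_ne ?_, hnay⟩
    · rintro rfl
      exact hnay (hr.refl a)
    · rintro rfl
      exact hnay hac
  have hPd := (iff_of_joinRel_of_closed hp hq
    (fun u => hclosed u _ (joinRel_apply_left p q u) (Or.inl rfl))
    (fun u => hclosed u _ (joinRel_apply_right p q u) (Or.inr rfl)) hbd).mp ⟨hab, hbc, hnab⟩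
  exact lt_asymm hcd hPd.2.1

end Crossing

theorem card_tupleSet_mul_pow_numBlocks_le {n N : ℕ} (hN : 1 ≤ N) (ε : Fin (2 * n) → Bool)
    (σ : Fin (2 * n) → Equiv.Perm (Fin N × Fin N)) {p q : Equiv.Perm (Fin (2 * n))}
    (hp : Function.Involutive p) (hq : Function.Involutive q)
    (hpf : ∀ s, p s ≠ s) (hqf : ∀ s, q s ≠ s)
    (hcross : ∃ a b c d : Fin (2 * n), a < b ∧ b < c ∧ c < d ∧
      joinRel p q a c ∧ joinRel p q b d ∧ ¬ joinRel p q a b) :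
    #(tupleSet n N ε σ p q) * N ^ numBlocks p q ≤ N ^ (2 * n) := by
  obtain ⟨a, b, c, d, hab, hbc, hcd, hac, hbd, hnab⟩ := hcross
  obtain ⟨x, hax, hxc, y, hy, hyout⟩ := exists_partner_escape hp hq hab hbc hcd hac hbd hnab
  calc #(tupleSet n N ε σ p q) * N ^ numBlocks p q
      ≤ N ^ (∑ s, revealCost p q (earlier (revealOrder a x c) (revealOrder a x c s)) s) *
          N ^ numBlocks p q :=
        Nat.mul_le_mul_right _ (card_tupleSet_le_pow_sum_revealCost (revealOrder a x c)
          (revealOrder_injective hax hxc))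
    _ ≤ N ^ (2 * n) := by
        rw [← pow_add]
        exact Nat.pow_le_pow_right hN (sum_revealCost_revealOrder_add_numBlocks_le hp hq hpf hqf
          hax hxc hac hy hyout)

theorem stmt10_general (n : ℕ)
    (ε : Fin (2 * n) → Bool)
    (p q : Equiv.Perm (Fin (2 * n)))
    (hp : Function.Involutive p) (hq : Function.Involutive q)
    (hpf : ∀ s, p s ≠ s) (hqf : ∀ s, q s ≠ s)
    (hcross : ∃ a b c d : Fin (2 * n), a < b ∧ b < c ∧ c < d ∧
      joinRel p q a c ∧ joinRel p q b d ∧ ¬ joinRel p q a b) :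
    ∀ σ : (N : ℕ) → Fin (2 * n) → Equiv.Perm (Fin N × Fin N),
      Tendsto (fun N : ℕ =>
        ((tupleSet n N ε (σ N) p q).card : ℝ) * (N : ℝ) ^ numBlocks p q /
          (N : ℝ) ^ (2 * n + 1)) atTop (nhds 0) := by
  intro σ
  refine squeeze_zero' (.of_forall fun N => by positivity) ?_ tendsto_one_div_atTop_nhds_zero_nat
  filter_upwards [eventually_ge_atTop 1] with N hN
  have hNpos : (0 : ℝ) < N := by exact_mod_cast hN
  have hkey : ((tupleSet n N ε (σ N) p q).card : ℝ) * (N : ℝ) ^ numBlocks p q ≤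
      (N : ℝ) ^ (2 * n) := by
    exact_mod_cast card_tupleSet_mul_pow_numBlocks_le hN ε (σ N) hp hq hpf hqf hcross
  rw [div_le_div_iff₀ (by positivity) hNpos, pow_succ, one_mul]
  exact mul_le_mul_of_nonneg_right hkey hNpos.le

/-- If `p ∨ q` is crossing then, for any choice of the entry permutations,
`|A^{(p,q)}_N| = o(N^{2n + 1 - |p∨q|})` as `N → ∞` (stated by multiplying both sides by
`N^{|p∨q|}`). -/
theorem stmt10 (n : ℕ) (hn : 1 ≤ n)
    (ε : Fin (2 * n) → Bool)
    (p q : Equiv.Perm (Fin (2 * n)))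
    (hp : Function.Involutive p) (hq : Function.Involutive q)
    (hpf : ∀ s, p s ≠ s) (hqf : ∀ s, q s ≠ s)
    (hpε : ∀ s, ε (p s) ≠ ε s) (hqε : ∀ s, ε (q s) ≠ ε s)
    (hcross : ∃ a b c d : Fin (2 * n), a < b ∧ b < c ∧ c < d ∧
      joinRel p q a c ∧ joinRel p q b d ∧ ¬ joinRel p q a b) :
    ∀ σ : (N : ℕ) → Fin (2 * n) → Equiv.Perm (Fin N × Fin N),
      Tendsto (fun N : ℕ =>
        ((tupleSet n N ε (σ N) p q).card : ℝ) * (N : ℝ) ^ numBlocks p q /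
          (N : ℝ) ^ (2 * n + 1)) atTop (nhds 0) :=
  stmt10_general n ε p q hp hq hpf hqf hcross
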